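/- For a dcpo L, a strong Scott open set U is a co-prime element of the lattice σ_s(L) if and only if U is a filter (i.e., a strongly Scott open filtered upper set). -/

import Mathlib

/-!
Strongly Scott open sets are upper sets, and every complement `(Iic x)ᶜ` is strongly Scott open.
A filtered set covered by two upper sets lies in one of them: otherwise a common lower bound in
`U` of two witnesses would lie in neither. Conversely, if `x, y ∈ U` had no common lower bound in
`U`, then `U ⊆ (Iic x)ᶜ ∪ (Iic y)ᶜ`, although `x ∉ (Iic x)ᶜ` and `y ∉ (Iic y)ᶜ`.
-/

open Set

variable {L : Type*}

/-- A directed subset: nonempty and directed under `≤`. -/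
def DirSet [Preorder L] (D : Set L) : Prop := D.Nonempty ∧ DirectedOn (· ≤ ·) D

/-- Strongly Scott open sets (the family `σ^s(L)`). -/
def StronglyScottOpen [Preorder L] [SupSet L] (U : Set L) : Prop :=
  IsUpperSet U ∧ ∀ D : Set L, DirSet D → ∀ x : L,
    Ici (sSup D) ∩ Ici x ⊆ U → ∃ d ∈ D, Ici d ∩ Ici x ⊆ U

/-- The strong Scott topology `σ_s(L)`, generated by the strongly Scott open sets. -/
def strongScott (L : Type*) [Preorder L] [SupSet L] : TopologicalSpace L :=
  TopologicalSpace.generateFrom {U | StronglyScottOpen U}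

/-- Scott open sets. -/
def ScottOpen [Preorder L] [SupSet L] (U : Set L) : Prop :=
  IsUpperSet U ∧ ∀ D : Set L, DirSet D → sSup D ∈ U → (D ∩ U).Nonempty

/-- The Scott topology `σ(L)`. -/
def scottTop (L : Type*) [Preorder L] [SupSet L] : TopologicalSpace L :=
  TopologicalSpace.generateFrom {U | ScottOpen U}

/-- The upper topology `υ(L)`. -/
def upperTop (L : Type*) [Preorder L] : TopologicalSpace L :=
  TopologicalSpace.generateFrom {U | ∃ x : L, U = (Iic x)ᶜ}

/-- The lower topology `ω(L)`. -/
def lowerTop (L : Type*) [Preorder L] : TopologicalSpace L :=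
  TopologicalSpace.generateFrom {U | ∃ x : L, U = (Ici x)ᶜ}

/-- The strong way-below relation `x ≪_s y`. -/
def SWayBelow [Preorder L] (x y : L) : Prop :=
  ∀ D : Set L, DirSet D → ∀ a : L,
    (⋂ d ∈ D, Ici d) ∩ Ici a ⊆ Ici y → ∃ d ∈ D, Ici d ∩ Ici a ⊆ Ici x

/-- The way-below relation `x ≪ y`. -/
def WayBelow [Preorder L] [SupSet L] (x y : L) : Prop :=
  ∀ D : Set L, DirSet D → y ≤ sSup D → ∃ d ∈ D, x ≤ d

/-- `X` with topology `t` is a C-space (w.r.t. the order of `L`). -/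
def IsCSpace [Preorder L] (t : TopologicalSpace L) : Prop :=
  ∀ U : Set L, @IsOpen _ (t) U → ∀ x ∈ U, ∃ y ∈ U,
    x ∈ @interior L t (Ici y) ∧ Ici y ⊆ U

/-- `L` is a strongly continuous domain. -/
def StronglyContinuousDomain (L : Type*) [Preorder L] [SupSet L] : Prop :=
  IsCSpace (strongScott L)

/-- `L` is a continuous domain. -/
def ContinuousDomain (L : Type*) [Preorder L] [SupSet L] : Prop :=
  ∀ x : L, DirSet {y | WayBelow y x} ∧ IsLUB {y | WayBelow y x} x

/-- `L` is a hypercontinuous domain. -/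
def HypercontinuousDomain (L : Type*) [Preorder L] : Prop :=
  ∀ x : L, DirSet {y | x ∈ @interior L (upperTop L) (Ici y)} ∧
    IsLUB {y | x ∈ @interior L (upperTop L) (Ici y)} x

/-- The strong Lawson topology `λ_s(L)`: common refinement of `σ_s(L)` and `ω(L)`. -/
def strongLawson (L : Type*) [Preorder L] [SupSet L] : TopologicalSpace L :=
  TopologicalSpace.generateFrom
    {U | @IsOpen _ (strongScott L) U ∨ @IsOpen _ (lowerTop L) U}

lemma isUpperSet_of_isOpen_strongScott [Preorder L] [SupSet L] {U : Set L}
    (hU : @IsOpen _ (strongScott L) U) : IsUpperSet U := by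
  induction hU with
  | basic V hV => exact hV.1
  | univ => exact isUpperSet_univ
  | inter _ _ _ _ hV hW => exact hV.inter hW
  | sUnion _ _ hS => exact isUpperSet_sUnion hS

lemma stronglyScottOpen_compl_Iic [CompletePartialOrder L] (x : L) :
    StronglyScottOpen (Iic x)ᶜ := by
  refine ⟨(isLowerSet_Iic x).compl, fun D hD a hDa => ?_⟩
  have hx : ¬ (sSup D ≤ x ∧ a ≤ x) := fun h => hDa h le_rfl
  rcases not_and_or.1 hx with hDx | hax
  · obtain ⟨d, hd, hdx⟩ : ∃ d ∈ D, ¬ d ≤ x := by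
      by_contra! hle
      exact hDx (hD.2.sSup_le hle)
    exact ⟨d, hd, fun u hu hux => hdx (hu.1.trans hux)⟩
  · obtain ⟨d, hd⟩ := hD.1
    exact ⟨d, hd, fun u hu hux => hax (hu.2.trans hux)⟩

lemma isOpen_strongScott_compl_Iic [CompletePartialOrder L] (x : L) :
    @IsOpen _ (strongScott L) (Iic x)ᶜ :=
  TopologicalSpace.GenerateOpen.basic _ (stronglyScottOpen_compl_Iic x)

lemma DirectedOn.subset_or_subset_of_subset_union [Preorder L] {U V W : Set L}
    (hU : DirectedOn (· ≥ ·) U) (hV : IsUpperSet V) (hW : IsUpperSet W) (h : U ⊆ V ∪ W) :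
    U ⊆ V ∨ U ⊆ W := by
  by_contra! ⟨hUV, hUW⟩
  obtain ⟨v, hvU, hvV⟩ := not_subset.1 hUV
  obtain ⟨w, hwU, hwW⟩ := not_subset.1 hUW
  obtain ⟨z, hzU, hzv, hzw⟩ := hU v hvU w hwU
  rcases h hzU with hzV | hzW
  · exact hvV (hV hzv hzV)
  · exact hwW (hW hzw hzW)

lemma directedOn_ge_of_subset_compl_Iic_union [Preorder L] {U : Set L}
    (h : ∀ x y : L, U ⊆ (Iic x)ᶜ ∪ (Iic y)ᶜ → U ⊆ (Iic x)ᶜ ∨ U ⊆ (Iic y)ᶜ) :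
    DirectedOn (· ≥ ·) U := by
  intro x hx y hy
  by_contra! hno
  have hcover : U ⊆ (Iic x)ᶜ ∪ (Iic y)ᶜ := fun z hz =>
    not_and_or.1 fun hzxy => hno z hz hzxy.1 hzxy.2
  rcases h x y hcover with hUx | hUy
  · exact hUx hx le_rfl
  · exact hUy hy le_rfl

theorem strongScott_open_coprime_iff_filter [CompletePartialOrder L]
    (U : Set L) (hU : @IsOpen _ (strongScott L) U) :
    (U.Nonempty ∧ ∀ V W : Set L, @IsOpen _ (strongScott L) V →
        @IsOpen _ (strongScott L) W → U ⊆ V ∪ W → U ⊆ V ∨ U ⊆ W) ↔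
    (U.Nonempty ∧ IsUpperSet U ∧
        ∀ x ∈ U, ∀ y ∈ U, ∃ z ∈ U, z ≤ x ∧ z ≤ y) := by
  constructor
  · rintro ⟨hne, hcoprime⟩
    refine ⟨hne, isUpperSet_of_isOpen_strongScott hU, ?_⟩
    exact directedOn_ge_of_subset_compl_Iic_union fun x y =>
      hcoprime _ _ (isOpen_strongScott_compl_Iic x) (isOpen_strongScott_compl_Iic y)
  · rintro ⟨hne, -, hfiltered⟩
    exact ⟨hne, fun V W hV hW => DirectedOn.subset_or_subset_of_subset_union hfiltered
      (isUpperSet_of_isOpen_strongScott hV) (isUpperSet_of_isOpen_strongScott hW)⟩
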